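/- arXiv:math/0411422 — 6 statements merged into one kernel-verified Lean document; each statement's English description precedes it below -/
import Mathlib

section
/- Let R be a commutative Noetherian ring with unity and let I be a regular ideal of R (an ideal containing a nonzerodivisor). Then the set Ĩ = ⋃_{k≥1} (I^{k+1} : I^k) is an ideal of R containing I, the ideals I^{k+1} : I^k increase with k and Ĩ = I^{k+1} : I^k for all sufficiently large k, (Ĩ)^n = I^n for all sufficiently large n, and Ĩ is the unique largest ideal with this property: if J is any ideal of R with J^n = I^n for all sufficiently large n, then J ⊆ Ĩ. -/
/-!
Each `u ∈ I^{k+1} : I^k` is integral over `I`: by the determinant trick applied to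
multiplication by `u` on the faithful module `I^k`, `u^d + a₁u^{d-1} + ⋯ + a_d = 0` with
`a_j ∈ I^j`. Together with `u^i I^m ⊆ I^{m+i}` for `m ≥ k`, this gives `(I + (u))^n = I^n`
for large `n`. Ideals with eventually the same powers as `I` are closed under sums, so in a
Noetherian ring they have a largest member, which contains every element of `Ĩ` and, by the
converse inclusion `J ⊆ I^{m+1} : I^m` for `J^m = I^m`, equals `Ĩ`. The colon ideals increase
with `k` and stabilize by the ascending chain condition.
-/

open Polynomial

/-- The Ratliff-Rush closure set `⋃_{k ≥ 1} (I^{k+1} : I^k)`. -/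
def rrSet {R : Type*} [CommRing R] (I : Ideal R) : Set R :=
  ⋃ k ∈ Set.Ici (1 : ℕ), ((I ^ (k + 1)).colon ((I ^ k : Ideal R) : Set R) : Set R)

section RatliffRush

variable {R : Type*} [CommRing R]

theorem Ideal.sup_pow_le_of_forall_pow_mul_pow_le {A B J : Ideal R} {n : ℕ}
    (h : ∀ i ≤ n, A ^ i * B ^ (n - i) ≤ J) : (A ⊔ B) ^ n ≤ J := by
  rw [← Ideal.add_eq_sup, add_pow, Ideal.sum_eq_sup, Finset.sup_le_iff]
  exact fun i hi => Ideal.mul_le_left.trans (h i (Finset.mem_range_succ_iff.mp hi))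

theorem Ideal.colon_pow_succ_mono (I : Ideal R) :
    Monotone fun k : ℕ => (I ^ (k + 1)).colon ((I ^ k : Ideal R) : Set R) := by
  refine monotone_nat_of_le_succ fun k u hu => Submodule.mem_colon.mpr fun b hb => ?_
  rw [pow_succ] at hb
  refine Submodule.mul_induction_on hb (fun x hx y hy => ?_) fun x y hx hy => ?_
  · rw [smul_eq_mul, ← mul_assoc, pow_succ _ (k + 1)]
    exact Ideal.mul_mem_mul (Submodule.mem_colon.mp hu x hx) hy
  · rw [smul_add]
    exact add_mem hx hy

theorem Ideal.pow_mul_mem_pow_add_of_mem_colon {I : Ideal R} {u b : R} {k m : ℕ}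
    (hu : u ∈ (I ^ (k + 1)).colon ((I ^ k : Ideal R) : Set R)) (hkm : k ≤ m) (hb : b ∈ I ^ m)
    (i : ℕ) : u ^ i * b ∈ I ^ (m + i) := by
  induction i with
  | zero => simpa using hb
  | succ i ih =>
    rw [pow_succ', mul_assoc, ← add_assoc]
    exact Submodule.mem_colon.mp (I.colon_pow_succ_mono (by omega : k ≤ m + i) hu) _ ih

theorem Ideal.exists_monic_coeff_mem_pow_eval_eq_zero {I M : Ideal R} (hM : M.FG) {y : R}
    (hyM : y ∈ M) (hy : y ∈ nonZeroDivisors R) {u : R} (hu : u ∈ (I * M).colon (M : Set R)) :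
    ∃ p : R[X], p.Monic ∧ (∀ j, p.coeff j ∈ I ^ (p.natDegree - j)) ∧ p.eval u = 0 := by
  have : Module.Finite R M := Module.Finite.iff_fg.mpr hM
  have hrange : LinearMap.range (algebraMap R (Module.End R M) u) ≤ I • ⊤ := by
    rintro _ ⟨m, rfl⟩
    rw [Submodule.mem_smul_top_iff, Ideal.smul_eq_mul]
    exact Submodule.mem_colon.mp hu _ m.2
  obtain ⟨p, hp, -, hcoeff, heval⟩ :=
    LinearMap.exists_monic_and_natDegree_eq_and_coeff_mem_pow_and_aeval_eq_zero R _ I hrange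
  refine ⟨p, hp, hcoeff, ?_⟩
  rw [aeval_algebraMap_apply_eq_algebraMap_eval] at heval
  have hzero : p.eval u * y = 0 := by
    simpa using congrArg Subtype.val (LinearMap.congr_fun heval ⟨y, hyM⟩)
  exact (mul_right_mem_nonZeroDivisors_eq_zero_iff hy).mp hzero

theorem Ideal.pow_mul_mem_pow_of_eval_eq_zero {I : Ideal R} {u : R} {k : ℕ}
    (hu : u ∈ (I ^ (k + 1)).colon ((I ^ k : Ideal R) : Set R)) {p : R[X]} (hp : p.Monic)
    (hcoeff : ∀ j, p.coeff j ∈ I ^ (p.natDegree - j)) (hpu : p.eval u = 0) {n : ℕ}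
    (hn : k + p.natDegree ≤ n) {i m : ℕ} (him : i + m = n) {b : R} (hb : b ∈ I ^ m) :
    u ^ i * b ∈ I ^ n := by
  induction i using Nat.strong_induction_on generalizing m b with
  | _ i IH =>
  rcases le_or_gt k m with hkm | hmk
  · rw [← him, add_comm]
    exact I.pow_mul_mem_pow_add_of_mem_colon hu hkm hb i
  -- Now `i > n - k ≥ d`, so the integral equation lowers the power of `u`.
  set d := p.natDegree
  have hud : u ^ d = -∑ j ∈ Finset.range d, p.coeff j * u ^ j := by
    have := congrArg (eval u) hp.as_sum
    simp only [eval_add, eval_pow, eval_X, eval_finsetSum, eval_mul, eval_C, hpu] at this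
    exact eq_neg_of_add_eq_zero_left this.symm
  have hexpand : u ^ i * b = -∑ j ∈ Finset.range d, u ^ (i - d + j) * (p.coeff j * b) := by
    have hsplit : u ^ i = u ^ (i - d) * u ^ d := by rw [← pow_add, Nat.sub_add_cancel (by omega)]
    rw [hsplit, hud, mul_neg, neg_mul, Finset.mul_sum, Finset.sum_mul]
    congr 1
    refine Finset.sum_congr rfl fun j _ => ?_
    rw [pow_add]
    ring
  rw [hexpand]
  refine neg_mem (Submodule.sum_mem _ fun j hj => ?_)
  have hjd := Finset.mem_range.mp hj
  refine IH (i - d + j) (by omega) (show i - d + j + (d - j + m) = n by omega) ?_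
  rw [pow_add]
  exact Ideal.mul_mem_mul (hcoeff j) hb

theorem Ideal.exists_sup_span_singleton_pow_eq_of_mem_colon [IsNoetherianRing R] {I : Ideal R}
    (hI : ∃ x ∈ I, x ∈ nonZeroDivisors R) {u : R} {k : ℕ}
    (hu : u ∈ (I ^ (k + 1)).colon ((I ^ k : Ideal R) : Set R)) :
    ∃ N, ∀ n, N ≤ n → (I ⊔ Ideal.span {u}) ^ n = I ^ n := by
  obtain ⟨x, hxI, hx⟩ := hI
  obtain ⟨p, hp, hcoeff, hpu⟩ := Ideal.exists_monic_coeff_mem_pow_eval_eq_zero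
    (IsNoetherian.noetherian (I ^ k)) (Ideal.pow_mem_pow hxI k) (pow_mem hx k)
    (by rwa [← pow_succ'])
  refine ⟨k + p.natDegree, fun n hn => le_antisymm ?_ (Ideal.pow_right_mono le_sup_left n)⟩
  refine Ideal.sup_pow_le_of_forall_pow_mul_pow_le fun i hi => ?_
  rw [Ideal.span_singleton_pow, mul_comm, Ideal.span_singleton_mul_le_iff]
  exact fun b hb => I.pow_mul_mem_pow_of_eval_eq_zero hu hp hcoeff hpu hn (by omega) hb

theorem Ideal.exists_sup_pow_eq {I J₁ J₂ : Ideal R} (h₁ : ∃ N, ∀ n, N ≤ n → J₁ ^ n = I ^ n)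
    (h₂ : ∃ N, ∀ n, N ≤ n → J₂ ^ n = I ^ n) : ∃ N, ∀ n, N ≤ n → (J₁ ⊔ J₂) ^ n = I ^ n := by
  obtain ⟨N₁, h₁⟩ := h₁
  obtain ⟨N₂, h₂⟩ := h₂
  refine ⟨2 * (N₁ + N₂), fun n hn => le_antisymm ?_ ?_⟩
  · refine Ideal.sup_pow_le_of_forall_pow_mul_pow_le fun i hi => le_of_eq ?_
    rcases le_total (N₁ + N₂) i with h | h
    · rw [h₁ i (by omega), ← h₂ i (by omega), ← pow_add, Nat.add_sub_cancel' hi, h₂ n (by omega)]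
    · rw [h₂ (n - i) (by omega), ← h₁ (n - i) (by omega), ← pow_add, Nat.add_sub_cancel' hi,
        h₁ n (by omega)]
  · rw [← h₁ n (by omega)]
    exact Ideal.pow_right_mono le_sup_left n

theorem coe_subset_rrSet_of_pow_eq {I J : Ideal R} (h : ∃ N, ∀ n, N ≤ n → J ^ n = I ^ n) :
    (J : Set R) ⊆ rrSet I := by
  obtain ⟨N, hN⟩ := h
  refine fun u hu => Set.mem_biUnion (Set.mem_Ici.mpr (le_max_right N 1))
    (Submodule.mem_colon.mpr fun b hb => ?_)
  rw [← hN _ (le_max_left N 1)] at hb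
  rw [smul_eq_mul, ← hN _ (by omega), pow_succ']
  exact Ideal.mul_mem_mul hu hb

theorem exists_colon_pow_eq_rrSet [IsNoetherianRing R] (I : Ideal R) :
    ∃ N, 1 ≤ N ∧ ∀ k, N ≤ k →
      ((I ^ (k + 1)).colon ((I ^ k : Ideal R) : Set R) : Set R) = rrSet I := by
  obtain ⟨N, hN⟩ := monotone_stabilizes_iff_noetherian.mpr inferInstance
    ⟨_, I.colon_pow_succ_mono⟩
  refine ⟨N + 1, by omega, fun k hk => Set.Subset.antisymm
    (fun u hu => Set.mem_biUnion (Set.mem_Ici.mpr (by omega)) hu) ?_⟩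
  simp only [rrSet, Set.iUnion_subset_iff]
  intro j _ u hu
  have hstab : ∀ l, N ≤ l → (I ^ (l + 1)).colon ((I ^ l : Ideal R) : Set R) =
      (I ^ (N + 1)).colon ((I ^ N : Ideal R) : Set R) := fun l hl => (hN l hl).symm
  rw [SetLike.mem_coe, hstab k (by omega), ← hstab (max j k) (by omega)]
  exact I.colon_pow_succ_mono (le_max_left j k) hu

end RatliffRush

/-- For a regular ideal `I` in a commutative Noetherian ring `R`, the set
`Ĩ = ⋃_{k≥1} (I^{k+1} : I^k)` is an ideal containing `I`, the colon ideals increase with `k`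
and stabilize to `Ĩ`, `(Ĩ)^n = I^n` for all large `n`, and `Ĩ` is the unique largest ideal
with this property. -/
theorem stmt0 {R : Type*} [CommRing R] [IsNoetherianRing R] (I : Ideal R)
    (hreg : ∃ x ∈ I, x ∈ nonZeroDivisors R) :
    (∀ k l : ℕ, 1 ≤ k → k ≤ l → (I ^ (k + 1)).colon ((I ^ k : Ideal R) : Set R) ≤ (I ^ (l + 1)).colon ((I ^ l : Ideal R) : Set R)) ∧
    (∃ N : ℕ, 1 ≤ N ∧ ∀ k : ℕ, N ≤ k →
      ((I ^ (k + 1)).colon ((I ^ k : Ideal R) : Set R) : Set R) = rrSet I) ∧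
    (∃ J : Ideal R, (J : Set R) = rrSet I ∧ I ≤ J ∧
      (∃ N : ℕ, ∀ n : ℕ, N ≤ n → J ^ n = I ^ n) ∧
      (∀ J' : Ideal R, (∃ N : ℕ, ∀ n : ℕ, N ≤ n → J' ^ n = I ^ n) →
        (J' : Set R) ⊆ rrSet I)) := by
  set S : Set (Ideal R) := {J | ∃ N, ∀ n, N ≤ n → J ^ n = I ^ n}
  have hIS : I ∈ S := ⟨0, fun _ _ => rfl⟩
  have hS : sSup S ∈ S := CompleteLattice.WellFoundedGT.isSupClosedCompact _ inferInstance S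
    ⟨I, hIS⟩ fun _ h₁ _ h₂ => Ideal.exists_sup_pow_eq h₁ h₂
  refine ⟨fun k l _ hkl => I.colon_pow_succ_mono hkl, exists_colon_pow_eq_rrSet I,
    sSup S, ?_, le_sSup hIS, hS, fun J hJ => coe_subset_rrSet_of_pow_eq hJ⟩
  refine (coe_subset_rrSet_of_pow_eq hS).antisymm fun u hu => ?_
  obtain ⟨k, -, hu⟩ := Set.mem_iUnion₂.mp hu
  exact Submodule.mem_sSup_of_mem (Ideal.exists_sup_span_singleton_pow_eq_of_mem_colon hreg hu)
    (Submodule.mem_sup_right (Ideal.mem_span_singleton_self u))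
end

section
/- Let R and S be commutative Noetherian rings such that R is a faithfully flat S-algebra, and let I ⊂ S be a regular ideal. Then the extended ideal IR is Ratliff-Rush closed in R if and only if I is Ratliff-Rush closed in S. -/
/-- An ideal is Ratliff-Rush closed if it equals its Ratliff-Rush closure. -/
def IsRatliffRushClosed {R : Type*} [CommRing R] (I : Ideal R) : Prop :=
  rrSet I = (I : Set R)

/-! If `K = (t₁, …, tₙ)`, then `J : K` is the kernel of `x ↦ (x tᵢ mod J)ᵢ : S → (S ⧸ J)ⁿ`.
Tensoring this map with a flat `R` gives `x ↦ (x tᵢ mod JR)ᵢ`, so `(J : K)R = JR : KR`.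
For `J = I^{k+1}`, `K = I^k` (finitely generated as `S` is Noetherian) this says
`((IR)^{k+1} : (IR)^k) = (I^{k+1} : I^k)R`, and faithful flatness gives `JR ⊆ IR ↔ J ⊆ I`. -/

open TensorProduct

namespace Ideal

variable {S R : Type*} [CommRing S] [CommRing R]

theorem map_colon_le (f : S →+* R) (J K : Ideal S) :
    (J.colon (K : Set S)).map f ≤ (J.map f).colon (K.map f : Set R) := by
  intro r hr
  refine Submodule.mem_colon.mpr fun p hp => ?_
  have hmul : J.colon (K : Set S) * K ≤ J :=
    mul_le.mpr fun _ hx k hk => Submodule.mem_colon.mp hx k hk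
  exact map_mono hmul (Ideal.map_mul f _ K ▸ mul_mem_mul hr hp)

def mulModPi {ι : Type*} (J : Ideal S) (t : ι → S) : S →ₗ[S] ι → S ⧸ J :=
  LinearMap.pi fun i => J.mkQ ∘ₗ LinearMap.mulRight S (t i)

@[simp]
theorem mulModPi_apply {ι : Type*} (J : Ideal S) (t : ι → S) (x : S) (i : ι) :
    mulModPi J t x i = Quotient.mk J (x * t i) :=
  rfl

theorem ker_mulModPi {ι : Type*} (J : Ideal S) (t : ι → S) :
    LinearMap.ker (mulModPi J t) = J.colon (Set.range t) := by
  ext x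
  simp only [LinearMap.mem_ker, funext_iff, mulModPi_apply, Pi.zero_apply,
    Quotient.eq_zero_iff_mem, Submodule.mem_colon, Set.forall_mem_range, smul_eq_mul]

variable [Algebra S R]

theorem tmul_mk_eq_zero_iff (J : Ideal S) (r : R) (s : S) :
    r ⊗ₜ[S] Quotient.mk J s = 0 ↔ algebraMap S R s * r ∈ J.map (algebraMap S R) := by
  rw [← map_eq_zero_iff _ (Algebra.TensorProduct.quotIdealMapEquivTensorQuot R J).symm.injective,
    Algebra.TensorProduct.quotIdealMapEquivTensorQuot_symm_tmul, Submodule.Quotient.mk_eq_zero,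
    Algebra.smul_def]

theorem mem_map_ker_of_tmul_eq_zero [Module.Flat S R] {M : Type*} [AddCommGroup M] [Module S M]
    (φ : S →ₗ[S] M) {r : R} (h : r ⊗ₜ[S] φ 1 = 0) :
    r ∈ Ideal.map (algebraMap S R) (LinearMap.ker φ) := by
  let ψ := (LinearMap.ker φ).liftQ φ le_rfl
  have hψ : Function.Injective (ψ.lTensor R) :=
    Module.Flat.lTensor_preserves_injective_linearMap _ <|
      LinearMap.ker_eq_bot.mp (Submodule.ker_liftQ_eq_bot' _ _ rfl)
  have hr : r ⊗ₜ[S] Quotient.mk (LinearMap.ker φ) 1 = 0 :=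
    hψ <| by rwa [LinearMap.lTensor_tmul, map_zero]
  simpa using (tmul_mk_eq_zero_iff _ r 1).mp hr

theorem map_colon_of_flat [Module.Flat S R] (J K : Ideal S) (hK : K.FG) :
    (J.colon (K : Set S)).map (algebraMap S R) =
      (J.map (algebraMap S R)).colon (K.map (algebraMap S R) : Set R) := by
  refine le_antisymm (map_colon_le _ J K) fun r hr => ?_
  obtain ⟨n, t, rfl⟩ := Submodule.fg_iff_exists_fin_generating_family.mp hK
  change r ∈ (J.map _).colon ((Ideal.map _ (span (Set.range t)) : Ideal R) : Set R) at hr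
  rw [map_span, colon_span, ← Set.range_comp] at hr
  rw [Submodule.colon_span, ← ker_mulModPi]
  refine mem_map_ker_of_tmul_eq_zero _ ((piRight S S R _).injective ?_)
  ext i
  simp only [piRight_apply, piRightHom_tmul, map_zero, Pi.zero_apply, mulModPi_apply, one_mul]
  rw [tmul_mk_eq_zero_iff, mul_comm]
  exact Submodule.mem_colon.mp hr _ ⟨i, rfl⟩

theorem map_le_map_iff_of_faithfullyFlat [Module.FaithfullyFlat S R] {J K : Ideal S} :
    J.map (algebraMap S R) ≤ K.map (algebraMap S R) ↔ J ≤ K := by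
  rw [map_le_iff_le_comap, comap_map_eq_self_of_faithfullyFlat]

end Ideal

theorem isRatliffRushClosed_iff_colon_le {R : Type*} [CommRing R] (I : Ideal R) :
    IsRatliffRushClosed I ↔ ∀ k, 1 ≤ k → (I ^ (k + 1)).colon ((I ^ k : Ideal R) : Set R) ≤ I := by
  have hI : (I : Set R) ⊆ rrSet I := fun x hx =>
    Set.mem_biUnion Set.self_mem_Ici <| Submodule.mem_colon.mpr fun p hp => by
      simpa [pow_two] using Ideal.mul_mem_mul hx (pow_one I ▸ hp)
  rw [IsRatliffRushClosed, Set.Subset.antisymm_iff, and_iff_left hI, rrSet,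
    Set.iUnion₂_subset_iff]
  rfl

theorem stmt2_general {S R : Type*} [CommRing S] [CommRing R] [IsNoetherianRing S]
    [Algebra S R] [Module.FaithfullyFlat S R] (I : Ideal S) :
    IsRatliffRushClosed (I.map (algebraMap S R)) ↔ IsRatliffRushClosed I := by
  rw [isRatliffRushClosed_iff_colon_le, isRatliffRushClosed_iff_colon_le]
  refine forall₂_congr fun k _ => ?_
  rw [← Ideal.map_pow, ← Ideal.map_pow,
    ← Ideal.map_colon_of_flat _ _ (IsNoetherian.noetherian _),
    Ideal.map_le_map_iff_of_faithfullyFlat]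

/-- If `R` is a faithfully flat `S`-algebra (both commutative Noetherian rings)
and `I ⊂ S` is a regular ideal, then `IR` is Ratliff-Rush closed in `R` iff `I` is
Ratliff-Rush closed in `S`. -/
theorem stmt2 {S R : Type*} [CommRing S] [CommRing R] [IsNoetherianRing S] [IsNoetherianRing R]
    [Algebra S R] [Module.FaithfullyFlat S R] (I : Ideal S)
    (hreg : ∃ x ∈ I, x ∈ nonZeroDivisors S) :
    IsRatliffRushClosed (I.map (algebraMap S R)) ↔ IsRatliffRushClosed I :=
  stmt2_general I
end

section
/- Let K be a field, let I be an ideal in the polynomial ring R = K[x_0, …, x_n], and let r ≥ 1. If I is primary to the ideal (x_r, …, x_n) (that is, I is a primary ideal whose radical is (x_r, …, x_n)) and Ĩ ∩ (I : (x_r, …, x_n)) ⊆ I, then I is Ratliff-Rush closed. -/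
/-!
Since the ring is Noetherian and `√I = M`, some `M ^ N ≤ I`, so an element `x` of
`I ^ (k + 1) : I ^ k` satisfies `x • M ^ (N k) ⊆ I`. Peel off one factor of `M` at a time:
when `x • M ^ (t + 1) ⊆ I`, every `x m` with `m ∈ M ^ t` lies in `Ĩ ∩ (I : M)` (the
Ratliff-Rush closure absorbs multiples), hence in `I`, so `x • M ^ t ⊆ I`. At `t = 0` this
says `x ∈ I`.
-/

namespace Ideal

variable {R : Type*} [CommRing R] {I M : Ideal R}

lemma mem_rrSet_iff {x : R} :
    x ∈ rrSet I ↔ ∃ k, 1 ≤ k ∧ x ∈ (I ^ (k + 1)).colon ((I ^ k : Ideal R) : Set R) := by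
  simp [rrSet]

lemma subset_rrSet (I : Ideal R) : (I : Set R) ⊆ rrSet I := fun x hx =>
  mem_rrSet_iff.mpr ⟨1, le_rfl, Submodule.mem_colon.mpr fun p hp => by
    simpa [smul_eq_mul, pow_two] using mul_mem_mul hx (by simpa using hp)⟩

lemma mul_mem_rrSet {x : R} (c : R) (hx : x ∈ rrSet I) : c * x ∈ rrSet I := by
  obtain ⟨k, hk, hxk⟩ := mem_rrSet_iff.mp hx
  exact mem_rrSet_iff.mpr ⟨k, hk, mul_mem_left _ c hxk⟩

lemma mul_mem_colon_of_mem_colon_pow_succ {x m : R} {t : ℕ}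
    (hx : x ∈ I.colon ((M ^ (t + 1) : Ideal R) : Set R)) (hm : m ∈ M ^ t) :
    x * m ∈ I.colon (M : Set R) :=
  Submodule.mem_colon.mpr fun p hp => by
    simpa [smul_eq_mul, mul_assoc] using
      Submodule.mem_colon.mp hx (m * p) (by rw [pow_succ]; exact mul_mem_mul hm hp)

lemma rrSet_inter_colon_pow_subset (hsub : rrSet I ∩ (I.colon (M : Set R) : Set R) ⊆ I)
    (t : ℕ) : rrSet I ∩ (I.colon ((M ^ t : Ideal R) : Set R) : Set R) ⊆ I := by
  induction t with
  | zero =>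
    rintro x ⟨-, hx⟩
    simpa using Submodule.mem_colon.mp hx 1 (by simp)
  | succ t ih =>
    rintro x ⟨hx, hxM⟩
    refine ih ⟨hx, Submodule.mem_colon.mpr fun m hm => ?_⟩
    exact hsub ⟨by simpa [mul_comm] using mul_mem_rrSet m hx,
      mul_mem_colon_of_mem_colon_pow_succ hxM hm⟩

lemma rrSet_subset_iUnion_colon_pow {N : ℕ} (hN : M ^ N ≤ I) :
    rrSet I ⊆ ⋃ t, (I.colon ((M ^ t : Ideal R) : Set R) : Set R) := by
  intro x hx
  obtain ⟨k, -, hxk⟩ := mem_rrSet_iff.mp hx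
  have hMk : M ^ (N * k) ≤ I ^ k := by
    rw [pow_mul]
    exact pow_right_mono hN k
  exact Set.mem_iUnion.mpr ⟨N * k,
    Submodule.colon_mono (pow_le_self k.succ_ne_zero) (SetLike.coe_subset_coe.mpr hMk) hxk⟩

theorem rrSet_eq_of_pow_le_of_inter_colon_subset {N : ℕ} (hN : M ^ N ≤ I)
    (hsub : rrSet I ∩ (I.colon (M : Set R) : Set R) ⊆ I) : rrSet I = I := by
  refine (subset_rrSet I).antisymm' fun x hx => ?_
  obtain ⟨t, ht⟩ := Set.mem_iUnion.mp (rrSet_subset_iUnion_colon_pow hN hx)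
  exact rrSet_inter_colon_pow_subset hsub t ⟨hx, ht⟩

end Ideal

theorem stmt4_general {K : Type*} [Field K] (n : ℕ)
    (I : Ideal (MvPolynomial (Fin (n + 1)) K))
    (M : Ideal (MvPolynomial (Fin (n + 1)) K))
    (hrad : I.radical = M)
    (hsub : rrSet I ∩ (I.colon M : Set (MvPolynomial (Fin (n + 1)) K)) ⊆ (I : Set _)) :
    rrSet I = (I : Set (MvPolynomial (Fin (n + 1)) K)) := by
  obtain ⟨N, hN⟩ := Ideal.exists_pow_le_of_le_radical_of_fg hrad.ge (IsNoetherian.noetherian M)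
  exact Ideal.rrSet_eq_of_pow_le_of_inter_colon_subset hN hsub

/-- Let `I` be an ideal of `K[x_0, …, x_n]` and `r ≥ 1`. If `I` is primary with
radical `(x_r, …, x_n)` and `Ĩ ∩ (I : (x_r, …, x_n)) ⊆ I`, then `I` is Ratliff-Rush
closed. -/
theorem stmt4 {K : Type*} [Field K] (n r : ℕ) (hr : 1 ≤ r) (hrn : r ≤ n)
    (I : Ideal (MvPolynomial (Fin (n + 1)) K))
    (M : Ideal (MvPolynomial (Fin (n + 1)) K))
    (hM : M = Ideal.span {f | ∃ i : Fin (n + 1), r ≤ (i : ℕ) ∧ f = MvPolynomial.X i})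
    (hprimary : I.IsPrimary) (hrad : I.radical = M)
    (hsub : rrSet I ∩ (I.colon M : Set (MvPolynomial (Fin (n + 1)) K)) ⊆ (I : Set _)) :
    rrSet I = (I : Set (MvPolynomial (Fin (n + 1)) K)) :=
  stmt4_general n I M hrad hsub
end

section
/- With the semigroup notation given in the context, let u = min{t ≥ 0 : g_t ∉ S} and υ = min{b ≥ 1 : b m_n ∈ Γ′}. Then there exist unique integers w ∈ [0, υ−1], z ∈ [0, u−1], λ ≥ 1 and μ ≥ 0 such that: (i) g_u = λ m_0 + w m_n; (ii) υ m_n = μ m_0 + g_z; and (iii) g_{u−z} + (υ−w) m_n equals (λ + μ + 1) m_0 if r_{u−z} < r_u, and equals (λ + μ) m_0 if r_{u−z} ≥ r_u. -/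
/-!
Since the `m_i` form an arithmetic progression `m_i = m_0 + i d`, one has
`g_t = (q_t + 1) m_0 + t d`, so `g_s + g_t` is `g_{s+t} + m_0` or `g_{s+t}` according as
`r_s < r_{s+t}` or not. Hence `Γ' = {k m_0 + g_t}` and `Γ = Γ' + ℕ m_n`.

As `g_u - m_0 ∈ Γ`, write `g_u = m_0 + y + w m_n` with `y ∈ Γ'` and `w` minimal. Minimality of `υ`
forces `w < υ`, and `y = k m_0 + g_t` with `t > 0` would put `g_{u-t} - m_0` in `Γ`, against the
minimality of `u`. Likewise `υ m_n = μ m_0 + g_z` with `z` minimal has `z < u`, and (iii) is the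
relation between `g_{u-z} + g_z` and `g_u`. Two representations with different `w` produce a
smaller multiple of `m_n` in `Γ'`; two with different `μ` put some `g_z - m_0`, `z < u`, in `Γ`.
-/

/-- Division of `t` by `p` with the remainder taken in `[1, p]` rather than `[0, p)`; in particular
`q 0 = -1` and `r 0 = p`. -/
def IsShiftedDivMod (p : ℕ) (q : ℕ → ℤ) (r : ℕ → ℕ) : Prop :=
  ∀ t : ℕ, 1 ≤ r t ∧ r t ≤ p ∧ (t : ℤ) = q t * p + r t

theorem Int.lt_of_mul_lt_mul_right_natCast {a b : ℤ} {p : ℕ} (h : a * p < b * p) : a < b :=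
  Int.lt_of_mul_lt_mul_right h (Int.natCast_nonneg p)

namespace IsShiftedDivMod

variable {p : ℕ} {q : ℕ → ℤ} {r : ℕ → ℕ}

theorem one_le (h : IsShiftedDivMod p q r) : 1 ≤ p :=
  (h 0).1.trans (h 0).2.1

theorem q_zero (h : IsShiftedDivMod p q r) : q 0 = -1 := by
  obtain ⟨h1, h2, h3⟩ := h 0
  push_cast at h3
  have := Int.lt_of_mul_lt_mul_right_natCast (show (-2 : ℤ) * p < q 0 * p by omega)
  have := Int.lt_of_mul_lt_mul_right_natCast (show q 0 * p < 0 * p by omega)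
  omega

theorem q_nonneg (h : IsShiftedDivMod p q r) {t : ℕ} (ht : 1 ≤ t) : 0 ≤ q t := by
  obtain ⟨h1, h2, h3⟩ := h t
  have := Int.lt_of_mul_lt_mul_right_natCast (show (-1 : ℤ) * p < q t * p by omega)
  omega

theorem q_eq_zero_and_r_eq_self (h : IsShiftedDivMod p q r) {i : ℕ} (hi : 1 ≤ i) (hip : i ≤ p) :
    q i = 0 ∧ r i = i := by
  obtain ⟨h1, h2, h3⟩ := h i
  have := Int.lt_of_mul_lt_mul_right_natCast (show (-1 : ℤ) * p < q i * p by omega)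
  have := Int.lt_of_mul_lt_mul_right_natCast (show q i * p < 1 * p by omega)
  have hq : q i = 0 := by omega
  rw [hq] at h3
  omega

theorem add_cases (h : IsShiftedDivMod p q r) (s t : ℕ) :
    (q (s + t) = q s + q t ∧ r (s + t) = r s + r t) ∨
      (q (s + t) = q s + q t + 1 ∧ r (s + t) + p = r s + r t) := by
  obtain ⟨hs1, hs2, hs3⟩ := h s
  obtain ⟨ht1, ht2, ht3⟩ := h t
  obtain ⟨h1, h2, h3⟩ := h (s + t)
  have key : (q (s + t) - q s - q t) * p = r s + r t - r (s + t) := by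
    push_cast at h3; linear_combination hs3 + ht3 - h3
  have := Int.lt_of_mul_lt_mul_right_natCast (show (-1 : ℤ) * p < _ * p by rw [key]; omega)
  have := Int.lt_of_mul_lt_mul_right_natCast (show _ * p < (2 : ℤ) * p by rw [key]; omega)
  obtain hk | hk : q (s + t) - q s - q t = 0 ∨ q (s + t) - q s - q t = 1 := by omega
  · rw [hk] at key; omega
  · rw [hk] at key; omega

variable {a d : ℤ} {g : ℕ → ℤ}

theorem seq_zero (h : IsShiftedDivMod p q r) (hg : ∀ t, g t = (q t + 1) * a + t * d) :
    g 0 = 0 := by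
  simp [hg, h.q_zero]

theorem seq_add (h : IsShiftedDivMod p q r) (hg : ∀ t, g t = (q t + 1) * a + t * d)
    (s t : ℕ) : g s + g t = g (s + t) + (if r s < r (s + t) then 1 else 0 : ℕ) * a := by
  rcases h.add_cases s t with ⟨hq, hr⟩ | ⟨hq, hr⟩
  · rw [if_pos (by have := (h t).1; omega)]
    simp only [hg, hq]; push_cast; ring
  · rw [if_neg (by have := (h t).2.1; omega)]
    simp only [hg, hq]; push_cast; ring

theorem seq_strictMono (h : IsShiftedDivMod p q r) (hg : ∀ t, g t = (q t + 1) * a + t * d)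
    (ha : 0 ≤ a) (hd : 0 < d) : StrictMono g := by
  refine strictMono_nat_of_lt_succ fun t => ?_
  have hadd := h.seq_add hg t 1
  have hg1 : g 1 = (q 1 + 1) * a + d := by simp [hg]
  have hq1 := h.q_nonneg le_rfl
  have : ((if r t < r (t + 1) then 1 else 0 : ℕ) : ℤ) * a ≤ a := by split_ifs <;> simp [ha]
  nlinarith

theorem seq_eq_linear {M : ℕ → ℤ} (h : IsShiftedDivMod p q r) (hM : ∀ i ≤ p, M i = M 0 + i * d)
    (hg : ∀ t, g t = q t * M p + M (r t)) (t : ℕ) : g t = (q t + 1) * M 0 + t * d := by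
  rw [hg, hM p le_rfl, hM _ (h t).2.1, (h t).2.2]
  ring

theorem mem_closure_iff {M : ℕ → ℤ} (h : IsShiftedDivMod p q r)
    (hM : ∀ i ≤ p, M i = M 0 + i * d) (hg : ∀ t, g t = q t * M p + M (r t)) {x : ℤ} :
    x ∈ AddSubmonoid.closure (M '' Set.Iic p) ↔ ∃ k t : ℕ, k * M 0 + g t = x := by
  have hg' := h.seq_eq_linear hM hg
  have hmem : ∀ i ≤ p, M i ∈ AddSubmonoid.closure (M '' Set.Iic p) := fun i hi =>
    AddSubmonoid.subset_closure ⟨i, hi, rfl⟩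
  constructor
  · intro hx
    induction hx using AddSubmonoid.closure_induction with
    | mem y hy =>
      obtain ⟨i, hi, rfl⟩ := hy
      rcases Nat.eq_zero_or_pos i with rfl | hi0
      · exact ⟨1, 0, by simp [h.seq_zero hg']⟩
      · obtain ⟨hq, hr⟩ := h.q_eq_zero_and_r_eq_self hi0 hi
        exact ⟨0, i, by rw [hg, hq, hr]; simp⟩
    | zero => exact ⟨0, 0, by simp [h.seq_zero hg']⟩
    | add x y _ _ hx hy =>
      obtain ⟨k, t, rfl⟩ := hx
      obtain ⟨k', t', rfl⟩ := hy
      refine ⟨k + k' + if r t < r (t + t') then 1 else 0, t + t', ?_⟩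
      have := h.seq_add hg' t t'
      simp only [Nat.cast_add]
      linear_combination -this
  · rintro ⟨k, t, rfl⟩
    refine add_mem (by simpa using AddSubmonoid.nsmul_mem _ (hmem 0 (Nat.zero_le p)) k) ?_
    rcases Nat.eq_zero_or_pos t with rfl | ht
    · rw [h.seq_zero hg']; exact zero_mem _
    · rw [hg, ← Int.toNat_of_nonneg (h.q_nonneg ht), ← nsmul_eq_mul]
      exact add_mem (AddSubmonoid.nsmul_mem _ (hmem p le_rfl) _) (hmem _ (h t).2.1)

end IsShiftedDivMod

theorem AddSubmonoid.mem_closure_union_singleton {A : Type*} [AddCommMonoid A] {s : Set A}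
    {c x : A} : x ∈ closure (s ∪ {c}) ↔ ∃ y ∈ closure s, ∃ b : ℕ, y + b • c = x := by
  simp only [closure_union, mem_sup, mem_closure_singleton]
  constructor
  · rintro ⟨y, hy, z, ⟨b, rfl⟩, rfl⟩; exact ⟨y, hy, b, rfl⟩
  · rintro ⟨y, hy, b, rfl⟩; exact ⟨y, hy, _, ⟨b, rfl⟩, rfl⟩

/-- The setting of the theorem with `a = m_0` and `c = m_n`. -/
structure NormalForm (a c : ℤ) (g : ℕ → ℤ) (r : ℕ → ℕ) (Γ' Γ : AddSubmonoid ℤ) : Prop where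
  pos : 0 < a
  nonneg : 0 ≤ c
  g_zero : g 0 = 0
  g_strictMono : StrictMono g
  g_add : ∀ s t, g s + g t = g (s + t) + (if r s < r (s + t) then 1 else 0 : ℕ) * a
  mem_iff' : ∀ {x}, x ∈ Γ' ↔ ∃ k t : ℕ, k * a + g t = x
  mem_iff : ∀ {x}, x ∈ Γ ↔ ∃ y ∈ Γ', ∃ b : ℕ, y + b * c = x

namespace NormalForm

variable {a c : ℤ} {g : ℕ → ℤ} {r : ℕ → ℕ} {Γ' Γ : AddSubmonoid ℤ}

theorem of_isShiftedDivMod {p n : ℕ} {q : ℕ → ℤ} {d : ℤ} {M : ℕ → ℤ}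
    (h : IsShiftedDivMod p q r) (hM : ∀ i ≤ p, M i = M 0 + i * d) (hd : 0 < d)
    (ha : 0 < M 0) (hc : 0 ≤ M n) (hg : ∀ t, g t = q t * M p + M (r t)) :
    NormalForm (M 0) (M n) g r (AddSubmonoid.closure (M '' Set.Iic p))
      (AddSubmonoid.closure (M '' (Set.Iic p ∪ {n}))) where
  pos := ha
  nonneg := hc
  g_zero := h.seq_zero (h.seq_eq_linear hM hg)
  g_strictMono := h.seq_strictMono (h.seq_eq_linear hM hg) ha.le hd
  g_add := h.seq_add (h.seq_eq_linear hM hg)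
  mem_iff' := h.mem_closure_iff hM hg
  mem_iff := by
    intro x
    rw [Set.image_union, Set.image_singleton, AddSubmonoid.mem_closure_union_singleton]
    simp only [nsmul_eq_mul]

theorem mul_add_mem' (H : NormalForm a c g r Γ' Γ) (k t : ℕ) : (k : ℤ) * a + g t ∈ Γ' :=
  H.mem_iff'.2 ⟨k, t, rfl⟩

theorem le (H : NormalForm a c g r Γ' Γ) : Γ' ≤ Γ := fun x hx => H.mem_iff.2 ⟨x, hx, 0, by simp⟩

theorem exists_add_eq (H : NormalForm a c g r Γ' Γ) (s t : ℕ) :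
    ∃ δ ≤ 1, g s + g t = g (s + t) + (δ : ℕ) * a :=
  ⟨_, by split_ifs <;> simp, H.g_add s t⟩

theorem nonneg_of_mem (H : NormalForm a c g r Γ' Γ) {x : ℤ} (hx : x ∈ Γ) : 0 ≤ x := by
  obtain ⟨y, hy, b, rfl⟩ := H.mem_iff.1 hx
  obtain ⟨k, t, rfl⟩ := H.mem_iff'.1 hy
  have hgt : g 0 ≤ g t := H.g_strictMono.monotone (Nat.zero_le t)
  rw [H.g_zero] at hgt
  have := H.pos.le
  have := H.nonneg
  positivity

theorem one_le_of_sub_mem (H : NormalForm a c g r Γ' Γ) {u : ℕ} (hu : g u - a ∈ Γ) : 1 ≤ u := by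
  by_contra! hu0
  have := H.nonneg_of_mem hu
  rw [Nat.lt_one_iff.1 hu0, H.g_zero] at this
  linarith [H.pos]

theorem eq_zero_of_eq_mul_add (H : NormalForm a c g r Γ' Γ) {u l t w : ℕ}
    (hlt : ∀ s < u, g s - a ∉ Γ) (hl : 1 ≤ l) (h : g u = l * a + g t + w * c) : t = 0 := by
  by_contra ht
  have htu : t < u := H.g_strictMono.lt_iff_lt.1 <| by
    have : (1 : ℤ) ≤ l := by exact_mod_cast hl
    nlinarith [H.pos, H.nonneg]
  obtain ⟨δ, -, hδ⟩ := H.exists_add_eq (u - t) t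
  rw [Nat.sub_add_cancel htu.le] at hδ
  refine hlt (u - t) (by omega) (H.mem_iff.2 ⟨(l - 1 + δ : ℕ) * a + g 0, H.mul_add_mem' _ _, w, ?_⟩)
  rw [H.g_zero]
  push_cast [hl]
  linear_combination -hδ - h

theorem exists_eq_mul_add_mul (H : NormalForm a c g r Γ' Γ) {u v : ℕ} (hv1 : 1 ≤ v)
    (hv : (v : ℤ) * c ∈ Γ') (hu : g u - a ∈ Γ) (hlt : ∀ s < u, g s - a ∉ Γ) :
    ∃ l w : ℕ, 1 ≤ l ∧ w < v ∧ g u = l * a + w * c := by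
  classical
  have hP : ∃ b : ℕ, ∃ y ∈ Γ', g u = a + y + b * c := by
    obtain ⟨y, hy, b, hb⟩ := H.mem_iff.1 hu
    exact ⟨b, y, hy, by linear_combination -hb⟩
  obtain ⟨y, hy, hw⟩ := Nat.find_spec hP
  have hwv : Nat.find hP < v := by
    by_contra! hle
    refine Nat.find_min hP (show Nat.find hP - v < Nat.find hP by omega)
      ⟨y + v * c, add_mem hy hv, ?_⟩
    push_cast [hle]
    linear_combination hw
  obtain ⟨k, t, rfl⟩ := H.mem_iff'.1 hy
  have hk : g u = (k + 1 : ℕ) * a + g t + Nat.find hP * c := by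
    push_cast; linear_combination hw
  refine ⟨k + 1, Nat.find hP, by omega, hwv, ?_⟩
  rwa [H.eq_zero_of_eq_mul_add hlt (by omega) hk, H.g_zero, add_zero] at hk

theorem exists_eq_mul_add (H : NormalForm a c g r Γ' Γ) {u v l w : ℕ} (hu1 : 1 ≤ u)
    (hv : (v : ℤ) * c ∈ Γ') (hvmin : ∀ b : ℕ, 1 ≤ b → b < v → (b : ℤ) * c ∉ Γ')
    (hl : 1 ≤ l) (hw : w < v) (hgu : g u = l * a + w * c) :
    ∃ μ z : ℕ, z < u ∧ (v : ℤ) * c = μ * a + g z := by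
  classical
  have hP : ∃ z μ : ℕ, (v : ℤ) * c = μ * a + g z := by
    obtain ⟨k, t, h⟩ := H.mem_iff'.1 hv
    exact ⟨t, k, h.symm⟩
  obtain ⟨μ, hμ⟩ := Nat.find_spec hP
  refine ⟨μ, Nat.find hP, ?_, hμ⟩
  by_contra! hle
  obtain ⟨δ, hδ, hadd⟩ := H.exists_add_eq u (Nat.find hP - u)
  rw [Nat.add_sub_cancel' hle] at hadd
  have key : ((v - w : ℕ) : ℤ) * c = (μ + l - δ : ℕ) * a + g (Nat.find hP - u) := by
    push_cast [hw.le, show δ ≤ μ + l by omega]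
    linear_combination hμ - hadd + hgu
  rcases Nat.eq_zero_or_pos w with rfl | hw0
  · exact Nat.find_min hP (show Nat.find hP - u < Nat.find hP by omega)
      ⟨μ + l - δ, by simpa using key⟩
  · exact hvmin (v - w) (by omega) (by omega) (key ▸ H.mul_add_mem' _ _)

theorem le_of_mul_add_mul_eq (H : NormalForm a c g r Γ' Γ) {v l w l' w' : ℕ}
    (hvmin : ∀ b : ℕ, 1 ≤ b → b < v → (b : ℤ) * c ∉ Γ') (hw : w < v)
    (h : (l : ℤ) * a + w * c = l' * a + w' * c) : w ≤ w' := by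
  by_contra! hlt
  have hll : l ≤ l' := by
    have : (0 : ℤ) ≤ ((w : ℤ) - w') * c := mul_nonneg (by omega) H.nonneg
    have : (l : ℤ) ≤ l' := le_of_mul_le_mul_right (by linarith) H.pos
    exact_mod_cast this
  refine hvmin (w - w') (by omega) (by omega) ?_
  have key : ((w - w' : ℕ) : ℤ) * c = (l' - l : ℕ) * a + g 0 := by
    push_cast [hlt.le, hll, H.g_zero]
    linear_combination h
  exact key ▸ H.mul_add_mem' _ _

theorem le_of_mul_add_eq (H : NormalForm a c g r Γ' Γ) {z z' μ μ' : ℕ} (hz : g z - a ∉ Γ)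
    (h : (μ : ℤ) * a + g z = μ' * a + g z') : μ' ≤ μ := by
  by_contra! hlt
  refine hz (H.le ?_)
  have key : g z - a = (μ' - μ - 1 : ℕ) * a + g z' := by
    push_cast [show 1 ≤ μ' - μ by omega, hlt.le]
    linear_combination h
  exact key ▸ H.mul_add_mem' _ _

theorem existsUnique (H : NormalForm a c g r Γ' Γ) {u v : ℕ} (hu : g u - a ∈ Γ)
    (hlt : ∀ s < u, g s - a ∉ Γ) (hv1 : 1 ≤ v) (hv : (v : ℤ) * c ∈ Γ')
    (hvmin : ∀ b : ℕ, 1 ≤ b → b < v → (b : ℤ) * c ∉ Γ') :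
    ∃! x : ℕ × ℕ × ℕ × ℕ,
      x.1 ≤ v - 1 ∧ x.2.1 ≤ u - 1 ∧ 1 ≤ x.2.2.1 ∧
      g u = (x.2.2.1 : ℤ) * a + (x.1 : ℤ) * c ∧
      (v : ℤ) * c = (x.2.2.2 : ℤ) * a + g x.2.1 ∧
      g (u - x.2.1) + ((v : ℤ) - (x.1 : ℤ)) * c =
        (if r (u - x.2.1) < r u then ((x.2.2.1 : ℤ) + x.2.2.2 + 1)
          else ((x.2.2.1 : ℤ) + x.2.2.2)) * a := by
  have hu1 := H.one_le_of_sub_mem hu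
  obtain ⟨l, w, hl, hw, hgu⟩ := H.exists_eq_mul_add_mul hv1 hv hu hlt
  obtain ⟨μ, z, hz, hvz⟩ := H.exists_eq_mul_add hu1 hv hvmin hl hw hgu
  refine ⟨(w, z, l, μ), ⟨Nat.le_sub_one_of_lt hw, Nat.le_sub_one_of_lt hz, hl, hgu, hvz, ?_⟩, ?_⟩
  · have hadd := H.g_add (u - z) z
    rw [Nat.sub_add_cancel hz.le] at hadd
    split_ifs at hadd ⊢ <;> push_cast <;> linear_combination hadd + hvz + hgu
  · rintro ⟨w', z', l', μ'⟩ ⟨hw', hz', -, hgu', hvz', -⟩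
    dsimp only at hw' hz' hgu' hvz'
    obtain rfl : w' = w := le_antisymm
      (H.le_of_mul_add_mul_eq hvmin (by omega) (hgu'.symm.trans hgu))
      (H.le_of_mul_add_mul_eq hvmin hw (hgu.symm.trans hgu'))
    obtain rfl : l' = l := by
      have : (l' : ℤ) * a = l * a := by linarith
      exact_mod_cast mul_right_cancel₀ H.pos.ne' this
    obtain rfl : μ' = μ := le_antisymm
      (H.le_of_mul_add_eq (hlt z hz) (hvz.symm.trans hvz'))
      (H.le_of_mul_add_eq (hlt z' (by omega)) (hvz'.symm.trans hvz))
    obtain rfl : z' = z := H.g_strictMono.injective (by linarith)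
    rfl

end NormalForm

theorem Nat.eq_add_mul_of_forall_succ {f : ℕ → ℕ} {d p : ℕ} (h : ∀ i < p, f (i + 1) = f i + d) :
    ∀ i ≤ p, f i = f 0 + i * d := by
  intro i hi
  induction i with
  | zero => simp
  | succ i ih => rw [h i hi, ih (by omega)]; ring

theorem stmt6_general (n p : ℕ)
    (m : ℕ → ℕ) (hm0 : 0 < m 0)
    (harith : ∃ d : ℕ, 0 < d ∧ ∀ i < p, m (i + 1) = m i + d)
    (Γ Γ' : AddSubmonoid ℤ)
    (hΓ : Γ = AddSubmonoid.closure ((fun i => (m i : ℤ)) '' (Set.Iic p ∪ {n})))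
    (hΓ' : Γ' = AddSubmonoid.closure ((fun i => (m i : ℤ)) '' Set.Iic p))
    (qf : ℕ → ℤ) (rf : ℕ → ℕ)
    (hqr : ∀ t : ℕ, 1 ≤ rf t ∧ rf t ≤ p ∧ (t : ℤ) = qf t * p + rf t)
    (g : ℕ → ℤ) (hg : ∀ t, g t = qf t * m p + m (rf t))
    (S : Set ℤ) (hS : S = {γ : ℤ | γ ∈ Γ ∧ γ - m 0 ∉ Γ})
    (u : ℕ) (hu : g u ∉ S ∧ ∀ t < u, g t ∈ S)
    (v : ℕ) (hv1 : 1 ≤ v) (hv2 : (v : ℤ) * m n ∈ Γ')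
    (hv3 : ∀ b : ℕ, 1 ≤ b → b < v → (b : ℤ) * m n ∉ Γ') :
    ∃! x : ℕ × ℕ × ℕ × ℕ,
      x.1 ≤ v - 1 ∧ x.2.1 ≤ u - 1 ∧ 1 ≤ x.2.2.1 ∧
      g u = (x.2.2.1 : ℤ) * m 0 + (x.1 : ℤ) * m n ∧
      (v : ℤ) * m n = (x.2.2.2 : ℤ) * m 0 + g x.2.1 ∧
      g (u - x.2.1) + ((v : ℤ) - (x.1 : ℤ)) * m n =
        (if rf (u - x.2.1) < rf u then ((x.2.2.1 : ℤ) + x.2.2.2 + 1)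
          else ((x.2.2.1 : ℤ) + x.2.2.2)) * m 0 := by
  obtain ⟨d, hd, hstep⟩ := harith
  have hM : ∀ i ≤ p, (m i : ℤ) = m 0 + i * d := fun i hi => by
    exact_mod_cast Nat.eq_add_mul_of_forall_succ hstep i hi
  subst hΓ hΓ' hS
  have H := NormalForm.of_isShiftedDivMod (M := fun i => (m i : ℤ)) (n := n) hqr hM
    (by exact_mod_cast hd) (by exact_mod_cast hm0) (by positivity) hg
  exact H.existsUnique (not_not.1 fun h => hu.1 ⟨H.le (H.mem_iff'.2 ⟨0, u, by simp⟩), h⟩)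
    (fun t ht => (hu.2 t ht).2) hv1 hv2 hv3

/-- Patil's Lemma 1.6: with the semigroup notation, letting
`u = min{t ≥ 0 : g_t ∉ S}` and `v = min{b ≥ 1 : b m_n ∈ Γ'}`, there exist unique integers
`w ∈ [0, v−1]`, `z ∈ [0, u−1]`, `λ ≥ 1`, `μ ≥ 0` satisfying (i) `g_u = λ m_0 + w m_n`;
(ii) `v m_n = μ m_0 + g_z`; (iii) `g_{u−z} + (v−w) m_n = (λ+μ+1) m_0` if `r_{u−z} < r_u`
and `= (λ+μ) m_0` if `r_{u−z} ≥ r_u`. -/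
theorem stmt6 (n p : ℕ) (hn : 2 ≤ n) (hp : p = n - 1)
    (m : ℕ → ℕ) (hm0 : 0 < m 0) (hmn : 0 < m n)
    (harith : ∃ d : ℕ, 0 < d ∧ ∀ i < p, m (i + 1) = m i + d)
    (hgcd : ∀ c : ℕ, (∀ i ≤ p, c ∣ m i) → c ∣ m n → c = 1)
    (Γ Γ' : AddSubmonoid ℤ)
    (hΓ : Γ = AddSubmonoid.closure ((fun i => (m i : ℤ)) '' (Set.Iic p ∪ {n})))
    (hΓ' : Γ' = AddSubmonoid.closure ((fun i => (m i : ℤ)) '' Set.Iic p))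
    (hmin : ∀ j ∈ (Set.Iic p ∪ {n} : Set ℕ),
      (m j : ℤ) ∉ AddSubmonoid.closure ((fun i => (m i : ℤ)) '' ((Set.Iic p ∪ {n}) \ {j})))
    (qf : ℕ → ℤ) (rf : ℕ → ℕ)
    (hqr : ∀ t : ℕ, 1 ≤ rf t ∧ rf t ≤ p ∧ (t : ℤ) = qf t * p + rf t)
    (g : ℕ → ℤ) (hg : ∀ t, g t = qf t * m p + m (rf t))
    (S : Set ℤ) (hS : S = {γ : ℤ | γ ∈ Γ ∧ γ - m 0 ∉ Γ})
    (u : ℕ) (hu : g u ∉ S ∧ ∀ t < u, g t ∈ S)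
    (v : ℕ) (hv1 : 1 ≤ v) (hv2 : (v : ℤ) * m n ∈ Γ')
    (hv3 : ∀ b : ℕ, 1 ≤ b → b < v → (b : ℤ) * m n ∉ Γ') :
    ∃! x : ℕ × ℕ × ℕ × ℕ,
      x.1 ≤ v - 1 ∧ x.2.1 ≤ u - 1 ∧ 1 ≤ x.2.2.1 ∧
      g u = (x.2.2.1 : ℤ) * m 0 + (x.1 : ℤ) * m n ∧
      (v : ℤ) * m n = (x.2.2.2 : ℤ) * m 0 + g x.2.1 ∧
      g (u - x.2.1) + ((v : ℤ) - (x.1 : ℤ)) * m n =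
        (if rf (u - x.2.1) < rf u then ((x.2.2.1 : ℤ) + x.2.2.2 + 1)
          else ((x.2.2.1 : ℤ) + x.2.2.2)) * m 0 :=
  stmt6_general n p m hm0 harith Γ Γ' hΓ hΓ' qf rf hqr g hg S hS u hu v hv1 hv2 hv3
end

section
/- With the notation of the context, assume ε > 0 or q_z > 0. Then in R = K[x_1, …, x_n] one has the ideal equality inP : (x_n) = inP + J, where J is the ideal generated by the monomials x_i x_p^{q−q_z−ε} x_n^{υ−w−1} for εp + r − r_z ≤ i ≤ p−1, together with x_p^{q−q_z−ε+1} x_n^{υ−w−1} and x_n^{υ−1} (monomials with a negative exponent being omitted). -/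
/-- The variable `x_i` (for `1 ≤ i ≤ n`) of `K[x_1, …, x_n] = MvPolynomial (Fin n) K`. -/
noncomputable def xv (K : Type*) [Field K] (n : ℕ) [NeZero n] (i : ℕ) : MvPolynomial (Fin n) K :=
  MvPolynomial.X (Fin.ofNat n (i - 1 : ℕ))

/-- The monomial generators of the initial ideal `inP`: `x_i x_p^q` for `r ≤ i ≤ p`;
`x_j x_p^{q−qz−ε} x_n^{v−w}` for `εp + r − rz ≤ j ≤ p`; `x_n^v`; and `x_i x_j` for
`1 ≤ i ≤ j ≤ p−1`. A monomial with a negative exponent is omitted. -/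
noncomputable def inPgens (K : Type*) [Field K] (n : ℕ) [NeZero n] (p q r v w rz ε : ℕ) (qz : ℤ) :
    Set (MvPolynomial (Fin n) K) :=
  {f | ∃ i : ℕ, r ≤ i ∧ i ≤ p ∧ f = xv K n i * xv K n p ^ q} ∪
  {f | ∃ j : ℕ, ε * p + r ≤ j + rz ∧ j ≤ p ∧ qz + ε ≤ (q : ℤ) ∧
    f = xv K n j * xv K n p ^ ((q : ℤ) - qz - ε).toNat * xv K n n ^ (v - w)} ∪
  {xv K n n ^ v} ∪
  {f | ∃ i j : ℕ, 1 ≤ i ∧ i ≤ j ∧ j ≤ p - 1 ∧ f = xv K n i * xv K n j}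

/-!
`inP` is a monomial ideal, so `inP : (x_n)` is generated by the generators of `inP` with the
exponent of `x_n` lowered by one (where positive). Generators without `x_n` stay,
`x_j x_p^{q−q_z−ε} x_n^{υ−w}` turns into a generator of `J` (the second kind when `j = p`), and
`x_n^υ` into `x_n^{υ−1}`. Conversely every generator of `J` arises this way; for
`x_p^{q−q_z−ε+1} x_n^{υ−w−1}` this needs `q_z + ε ≤ q`, which holds because `z < u` and
`t ↦ (q_t, r_t)` is increasing for the lexicographic order.
-/

namespace Finsupp

theorem tsub_single_eq_self {ι : Type*} {f : ι →₀ ℕ} {a : ι} {m : ℕ} (h : f a = 0) :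
    f - single a m = f := by
  ext b
  rcases eq_or_ne b a with rfl | hb
  · simp [h]
  · simp [single_eq_of_ne hb]

theorem add_succ_nsmul_tsub_self {ι : Type*} (f g : ι →₀ ℕ) (k : ℕ) :
    f + (k + 1) • g - g = f + k • g := by
  rw [succ_nsmul, ← add_assoc, add_tsub_cancel_right]

end Finsupp

theorem Int.lt_or_eq_and_lt_of_mul_add_lt {a b c d p : ℤ} (hb : 1 ≤ b) (hd : d ≤ p) (hp : 0 ≤ p)
    (h : a * p + b < c * p + d) : a < c ∨ a = c ∧ b < d := by
  rcases lt_trichotomy a c with hac | rfl | hca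
  · exact .inl hac
  · exact .inr ⟨rfl, by linarith⟩
  · nlinarith

namespace MvPolynomial

variable {σ R : Type*} [CommSemiring R]

theorem mem_span_monomial_colon_X_iff {A : Set (σ →₀ ℕ)} {i : σ} {x : MvPolynomial σ R} :
    x ∈ (Ideal.span ((monomial · (1 : R)) '' A)).colon (Ideal.span {(X i : MvPolynomial σ R)}) ↔
      ∀ d ∈ x.support, ∃ s ∈ A, s - Finsupp.single i 1 ≤ d := by
  simp only [Ideal.mem_colon_span_singleton, mem_ideal_span_monomial_image, support_mul_X,
    Finset.forall_mem_map, addRightEmbedding_apply, tsub_le_iff_right]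

theorem span_monomial_colon_X_eq {A B : Set (σ →₀ ℕ)} {i : σ}
    (hAB : ∀ s ∈ A, ∃ t ∈ B, t ≤ s - Finsupp.single i 1)
    (hBA : ∀ t ∈ B, ∃ s ∈ A, s - Finsupp.single i 1 ≤ t) :
    (Ideal.span ((monomial · (1 : R)) '' A)).colon (Ideal.span {(X i : MvPolynomial σ R)}) =
      Ideal.span ((monomial · (1 : R)) '' B) := by
  ext x
  rw [mem_span_monomial_colon_X_iff, mem_ideal_span_monomial_image]
  refine forall₂_congr fun d _ => ⟨fun ⟨s, hs, hsd⟩ => ?_, fun ⟨t, ht, htd⟩ => ?_⟩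
  · obtain ⟨t, ht, hts⟩ := hAB s hs
    exact ⟨t, ht, hts.trans hsd⟩
  · obtain ⟨s, hs, hst⟩ := hBA t ht
    exact ⟨s, hs, hst.trans htd⟩

end MvPolynomial

open MvPolynomial

section InitialIdeal

variable {K : Type*} [Field K] {n : ℕ} [NeZero n] {p q r v w rz ε : ℕ} {qz : ℤ}

noncomputable def xvExp (n : ℕ) [NeZero n] (k : ℕ) : Fin n →₀ ℕ :=
  Finsupp.single (Fin.ofNat n (k - 1)) 1

theorem xv_eq_monomial (k : ℕ) : xv K n k = monomial (xvExp n k) 1 := rfl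

theorem xvExp_apply_last (hn : 2 ≤ n) {k : ℕ} (hk : k ≤ n - 1) :
    xvExp n k (Fin.ofNat n (n - 1)) = 0 := by
  refine Finsupp.single_eq_of_ne fun h => ?_
  have := congrArg Fin.val h
  simp only [Fin.val_ofNat, Nat.mod_eq_of_lt (show n - 1 < n by omega),
    Nat.mod_eq_of_lt (show k - 1 < n by omega)] at this
  omega

def inPExps (n : ℕ) [NeZero n] (p q r v w rz ε : ℕ) (qz : ℤ) : Set (Fin n →₀ ℕ) :=
  {s | ∃ i : ℕ, r ≤ i ∧ i ≤ p ∧ s = xvExp n i + q • xvExp n p} ∪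
  {s | ∃ j : ℕ, ε * p + r ≤ j + rz ∧ j ≤ p ∧ qz + ε ≤ (q : ℤ) ∧
    s = xvExp n j + ((q : ℤ) - qz - ε).toNat • xvExp n p + (v - w) • xvExp n n} ∪
  {v • xvExp n n} ∪
  {s | ∃ i j : ℕ, 1 ≤ i ∧ i ≤ j ∧ j ≤ p - 1 ∧ s = xvExp n i + xvExp n j}

noncomputable def Jgens (K : Type*) [Field K] (n : ℕ) [NeZero n] (p q r v w rz ε : ℕ) (qz : ℤ) :
    Set (MvPolynomial (Fin n) K) :=
  {f | ∃ i : ℕ, ε * p + r ≤ i + rz ∧ i ≤ p - 1 ∧ qz + ε ≤ (q : ℤ) ∧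
    f = xv K n i * xv K n p ^ ((q : ℤ) - qz - ε).toNat * xv K n n ^ (v - w - 1)} ∪
  {f | qz + ε ≤ (q : ℤ) + 1 ∧
    f = xv K n p ^ ((q : ℤ) - qz - ε + 1).toNat * xv K n n ^ (v - w - 1)} ∪
  {xv K n n ^ (v - 1)}

def JExps (n : ℕ) [NeZero n] (p q r v w rz ε : ℕ) (qz : ℤ) : Set (Fin n →₀ ℕ) :=
  {s | ∃ i : ℕ, ε * p + r ≤ i + rz ∧ i ≤ p - 1 ∧ qz + ε ≤ (q : ℤ) ∧
    s = xvExp n i + ((q : ℤ) - qz - ε).toNat • xvExp n p + (v - w - 1) • xvExp n n} ∪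
  {s | qz + ε ≤ (q : ℤ) + 1 ∧
    s = ((q : ℤ) - qz - ε + 1).toNat • xvExp n p + (v - w - 1) • xvExp n n} ∪
  {(v - 1) • xvExp n n}

theorem image_inPExps :
    (monomial · (1 : K)) '' inPExps n p q r v w rz ε qz = inPgens K n p q r v w rz ε qz := by
  ext f
  simp [inPExps, inPgens, xv_eq_monomial, monomial_pow, monomial_mul, eq_comm,
    or_and_right, exists_or, and_assoc]

theorem image_JExps :
    (monomial · (1 : K)) '' JExps n p q r v w rz ε qz = Jgens K n p q r v w rz ε qz := by
  ext f
  simp [JExps, Jgens, xv_eq_monomial, monomial_pow, monomial_mul, eq_comm,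
    or_and_right, exists_or, and_assoc]

theorem tsub_xvExp_mem_of_mem_inPExps (hn : 2 ≤ n) (hp : p = n - 1) (hwv : w < v)
    {s : Fin n →₀ ℕ} (hs : s ∈ inPExps n p q r v w rz ε qz) :
    s - xvExp n n = s ∨ s - xvExp n n ∈ JExps n p q r v w rz ε qz := by
  have hlast : ∀ k ≤ p, xvExp n k (Fin.ofNat n (n - 1)) = 0 := fun k hk =>
    xvExp_apply_last hn (hp ▸ hk)
  have hvw : v - w = (v - w - 1) + 1 := by omega
  rcases hs with ((⟨i, -, hip, rfl⟩ | ⟨j, hj, hjp, hq, rfl⟩) | rfl) | ⟨i, j, -, hij, hjp, rfl⟩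
  · left
    refine Finsupp.tsub_single_eq_self ?_
    simp only [Finsupp.coe_add, Finsupp.coe_smul, Pi.add_apply, Pi.smul_apply, hlast i hip,
      hlast p le_rfl, smul_zero, add_zero]
  · right
    rw [hvw, Finsupp.add_succ_nsmul_tsub_self]
    rcases Nat.lt_or_ge j p with hjp' | hjp'
    · exact .inl (.inl ⟨j, hj, by omega, hq, rfl⟩)
    · obtain rfl : j = p := by omega
      refine .inl (.inr ⟨by omega, ?_⟩)
      rw [show ((q : ℤ) - qz - ε + 1).toNat = ((q : ℤ) - qz - ε).toNat + 1 by omega, succ_nsmul',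
        add_assoc]
  · right
    refine .inr (Set.mem_singleton_iff.mpr ?_)
    obtain ⟨k, rfl⟩ : ∃ k, v = k + 1 := ⟨v - 1, by omega⟩
    rw [succ_nsmul, add_tsub_cancel_right, Nat.add_sub_cancel]
  · left
    refine Finsupp.tsub_single_eq_self ?_
    simp only [Finsupp.coe_add, Pi.add_apply, hlast i (by omega), hlast j (by omega)]

theorem exists_tsub_xvExp_eq_of_mem_JExps (hkey : qz + ε ≤ (q : ℤ)) (hrp : ε * p + r ≤ p + rz)
    (hwv : w < v) {t : Fin n →₀ ℕ} (ht : t ∈ JExps n p q r v w rz ε qz) :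
    ∃ s ∈ inPExps n p q r v w rz ε qz, s - xvExp n n = t := by
  have hvw : v - w = (v - w - 1) + 1 := by omega
  rcases ht with (⟨i, hi, hip, hq, rfl⟩ | ⟨-, rfl⟩) | rfl
  · refine ⟨_, .inl (.inl (.inr ⟨i, hi, by omega, hq, rfl⟩)), ?_⟩
    rw [hvw, Finsupp.add_succ_nsmul_tsub_self, Nat.add_sub_cancel]
  · refine ⟨_, .inl (.inl (.inr ⟨p, hrp, le_rfl, hkey, rfl⟩)), ?_⟩
    rw [hvw, Finsupp.add_succ_nsmul_tsub_self, add_comm (xvExp n p), ← succ_nsmul,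
      show ((q : ℤ) - qz - ε + 1).toNat = ((q : ℤ) - qz - ε).toNat + 1 by omega,
      Nat.add_sub_cancel]
  · refine ⟨_, .inl (.inr rfl), ?_⟩
    obtain ⟨k, rfl⟩ : ∃ k, v = k + 1 := ⟨v - 1, by omega⟩
    rw [succ_nsmul, add_tsub_cancel_right, Nat.add_sub_cancel]

theorem span_inPgens_colon_eq (hn : 2 ≤ n) (hp : p = n - 1) (hkey : qz + ε ≤ (q : ℤ))
    (hrp : ε * p + r ≤ p + rz) (hwv : w < v) :
    (Ideal.span (inPgens K n p q r v w rz ε qz)).colon (Ideal.span {xv K n n}) =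
      Ideal.span (inPgens K n p q r v w rz ε qz) ⊔ Ideal.span (Jgens K n p q r v w rz ε qz) := by
  rw [← Ideal.span_union, ← image_inPExps, ← image_JExps, ← Set.image_union]
  refine span_monomial_colon_X_eq (fun s hs => ?_) (fun t ht => ?_)
  · rcases tsub_xvExp_mem_of_mem_inPExps hn hp hwv hs with heq | hJ
    · exact ⟨s, .inl hs, heq.ge⟩
    · exact ⟨_, .inr hJ, le_rfl⟩
  · rcases ht with hA | hJ
    · exact ⟨t, hA, tsub_le_self⟩
    · obtain ⟨s, hs, heq⟩ := exists_tsub_xvExp_eq_of_mem_JExps hkey hrp hwv hJ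
      exact ⟨s, hs, heq.le⟩

end InitialIdeal

theorem stmt10_general {K : Type*} [Field K]
    (n p : ℕ) [NeZero n] (hp : p = n - 1)
    (qf : ℕ → ℤ) (rf : ℕ → ℕ)
    (hqr : ∀ t : ℕ, 1 ≤ rf t ∧ rf t ≤ p ∧ (t : ℤ) = qf t * p + rf t)
    (u : ℕ)
    (v : ℕ) (hv1 : 1 ≤ v)
    (w z : ℕ) (hw : w ≤ v - 1) (hz : z ≤ u - 1)
    (q r : ℕ) (hq : (q : ℤ) = qf u) (hr : r = rf u)
    (ε : ℕ) (hε : ε = if rf z < r then 0 else 1)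
    (inP : Ideal (MvPolynomial (Fin n) K))
    (hinP : inP = Ideal.span (inPgens K n p q r v w (rf z) ε (qf z))) :
    inP.colon (Ideal.span {xv K n n}) =
      inP ⊔ Ideal.span (
        {f | ∃ i : ℕ, ε * p + r ≤ i + rf z ∧ i ≤ p - 1 ∧ qf z + ε ≤ (q : ℤ) ∧
          f = xv K n i * xv K n p ^ ((q : ℤ) - qf z - ε).toNat * xv K n n ^ (v - w - 1)} ∪
        {f | qf z + ε ≤ (q : ℤ) + 1 ∧
          f = xv K n p ^ ((q : ℤ) - qf z - ε + 1).toNat * xv K n n ^ (v - w - 1)} ∪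
        {xv K n n ^ (v - 1)}) := by
  obtain ⟨hru1, hrup, hu⟩ := hqr u
  obtain ⟨hrz1, -, hz'⟩ := hqr z
  have hn : 2 ≤ n := by omega
  have hzu : (z : ℤ) < u := by
    have : (1 : ℤ) ≤ u := by rw [hu, ← hq]; nlinarith
    omega
  have hkey : qf z + ε ≤ (q : ℤ) := by
    rcases Int.lt_or_eq_and_lt_of_mul_add_lt (by exact_mod_cast hrz1) (by exact_mod_cast hrup)
        (by positivity) (hz' ▸ hu ▸ hzu) with hlt | ⟨heq, hlt⟩
        <;> split_ifs at hε <;> omega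
  have hrp : ε * p + r ≤ p + rf z := by split_ifs at hε <;> subst hε <;> omega
  rw [hinP]
  exact span_inPgens_colon_eq hn hp hkey hrp (by omega)

/-- assume `ε > 0` or `qz > 0`. Then in `R = K[x_1, …, x_n]` one has
`inP : (x_n) = inP + J`, where `J` is generated by `x_i x_p^{q−qz−ε} x_n^{v−w−1}` for
`εp + r − rz ≤ i ≤ p−1`, together with `x_p^{q−qz−ε+1} x_n^{v−w−1}` and `x_n^{v−1}`
(monomials with a negative exponent being omitted). -/
theorem stmt10 {K : Type*} [Field K]
    (n p : ℕ) [NeZero n] (hn : 2 ≤ n) (hp : p = n - 1)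
    (m : ℕ → ℕ) (hm0 : 0 < m 0) (hmn : 0 < m n)
    (harith : ∃ d : ℕ, 0 < d ∧ ∀ i < p, m (i + 1) = m i + d)
    (hgcd : ∀ c : ℕ, (∀ i ≤ p, c ∣ m i) → c ∣ m n → c = 1)
    (Γ Γ' : AddSubmonoid ℤ)
    (hΓ : Γ = AddSubmonoid.closure ((fun i => (m i : ℤ)) '' (Set.Iic p ∪ {n})))
    (hΓ' : Γ' = AddSubmonoid.closure ((fun i => (m i : ℤ)) '' Set.Iic p))
    (hmin : ∀ j ∈ (Set.Iic p ∪ {n} : Set ℕ),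
      (m j : ℤ) ∉ AddSubmonoid.closure ((fun i => (m i : ℤ)) '' ((Set.Iic p ∪ {n}) \ {j})))
    (qf : ℕ → ℤ) (rf : ℕ → ℕ)
    (hqr : ∀ t : ℕ, 1 ≤ rf t ∧ rf t ≤ p ∧ (t : ℤ) = qf t * p + rf t)
    (g : ℕ → ℤ) (hg : ∀ t, g t = qf t * m p + m (rf t))
    (S : Set ℤ) (hS : S = {γ : ℤ | γ ∈ Γ ∧ γ - m 0 ∉ Γ})
    (u : ℕ) (hu : g u ∉ S ∧ ∀ t < u, g t ∈ S)
    (v : ℕ) (hv1 : 1 ≤ v) (hv2 : (v : ℤ) * m n ∈ Γ')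
    (hv3 : ∀ b : ℕ, 1 ≤ b → b < v → (b : ℤ) * m n ∉ Γ')
    (w z L mu : ℕ) (hw : w ≤ v - 1) (hz : z ≤ u - 1) (hL : 1 ≤ L)
    (hgu : g u = (L : ℤ) * m 0 + (w : ℤ) * m n)
    (hvmn : (v : ℤ) * m n = (mu : ℤ) * m 0 + g z)
    (q r : ℕ) (hq : (q : ℤ) = qf u) (hr : r = rf u)
    (ε : ℕ) (hε : ε = if rf z < r then 0 else 1)
    (inP : Ideal (MvPolynomial (Fin n) K))
    (hinP : inP = Ideal.span (inPgens K n p q r v w (rf z) ε (qf z)))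
    (hcase : 0 < ε ∨ 0 < qf z) :
    inP.colon (Ideal.span {xv K n n}) =
      inP ⊔ Ideal.span (
        {f | ∃ i : ℕ, ε * p + r ≤ i + rf z ∧ i ≤ p - 1 ∧ qf z + ε ≤ (q : ℤ) ∧
          f = xv K n i * xv K n p ^ ((q : ℤ) - qf z - ε).toNat * xv K n n ^ (v - w - 1)} ∪
        {f | qf z + ε ≤ (q : ℤ) + 1 ∧
          f = xv K n p ^ ((q : ℤ) - qf z - ε + 1).toNat * xv K n n ^ (v - w - 1)} ∪
        {xv K n n ^ (v - 1)}) :=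
  stmt10_general n p hp qf rf hqr u v hv1 w z hw hz q r hq hr ε hε inP hinP
end

section
/- With the notation of the context, assume ε > 0 or q_z > 0, and that q − q_z − ε − 1 ≥ 0. Then for every i with εp + r − r_z ≤ i ≤ p−1, the monomial x_i x_p^{q−q_z−ε−1} x_n^{υ−1} does not belong to the Ratliff-Rush closure of inP; in particular there is no integer m ≥ 1 with x_i x_p^{q−q_z−ε−1} x_n^{υ−1} · (x_i^2)^m ∈ (inP)^{m+1}. -/
open MvPolynomial Pointwise

theorem exists_mul_pow_mem_pow_of_mem_rrSet {R : Type*} [CommRing R] {I : Ideal R} {x y : R}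
    (hx : x ∈ rrSet I) (hy : y ∈ I) : ∃ k, x * y ^ k ∈ I ^ (k + 1) := by
  simp only [rrSet, Set.mem_iUnion, SetLike.mem_coe, Set.mem_Ici] at hx
  obtain ⟨k, -, hxk⟩ := hx
  exact ⟨k, Submodule.mem_colon.mp hxk _ (Ideal.pow_mem_pow hy k)⟩

theorem Finsupp.mul_le_apply_of_mem_nsmul {σ : Type*} {E : Set (σ →₀ ℕ)} {D : σ →₀ ℕ} {a : σ}
    {c : ℕ} (hE : ∀ s ∈ E, s ≤ D → c ≤ s a) (k : ℕ) :
    ∀ s ∈ k • E, s ≤ D → k * c ≤ s a := by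
  induction k with
  | zero => simp
  | succ k ih =>
    rw [succ_nsmul']
    rintro _ ⟨s, hs, t, ht, rfl⟩ hst
    have hsD : s ≤ D := le_trans le_self_add hst
    have htD : t ≤ D := le_trans le_add_self hst
    have := hE s hs hsD
    have := ih t ht htD
    simp only [Finsupp.add_apply]
    nlinarith

namespace MvPolynomial

variable {σ R : Type*} [CommSemiring R]

theorem monomial_one_image_add (A B : Set (σ →₀ ℕ)) :
    (fun s => monomial s (1 : R)) '' (A + B) =
      (fun s => monomial s (1 : R)) '' A * (fun s => monomial s (1 : R)) '' B := by
  simp only [← Set.image2_add, ← Set.image2_mul, Set.image_image2, Set.image2_image_left,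
    Set.image2_image_right, monomial_mul, one_mul]

theorem span_monomial_one_image_pow (E : Set (σ →₀ ℕ)) (k : ℕ) :
    Ideal.span ((fun s => monomial s (1 : R)) '' E) ^ k =
      Ideal.span ((fun s => monomial s (1 : R)) '' (k • E)) := by
  induction k with
  | zero => simp [← Set.singleton_zero]
  | succ k ih => rw [pow_succ', ih, Ideal.span_mul_span', succ_nsmul', monomial_one_image_add]

theorem monomial_one_notMem_span_pow [Nontrivial R] {G : Set (MvPolynomial σ R)}
    {D : σ →₀ ℕ} {a : σ} {c k : ℕ}
    (hG : ∀ g ∈ G, ∃ s, g = monomial s 1 ∧ (s ≤ D → c ≤ s a)) (hD : D a < k * c) :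
    monomial D (1 : R) ∉ Ideal.span G ^ k := by
  have hGE : G = (fun s => monomial s (1 : R)) '' {s | monomial s 1 ∈ G} := by
    ext g
    refine ⟨fun hg => ?_, fun ⟨s, hs, hsg⟩ => hsg ▸ hs⟩
    obtain ⟨s, rfl, -⟩ := hG g hg
    exact ⟨s, hg, rfl⟩
  have hE : ∀ s ∈ {s | monomial s (1 : R) ∈ G}, s ≤ D → c ≤ s a := fun s hs => by
    obtain ⟨s', hss', hs'⟩ := hG _ hs
    rwa [monomial_left_injective one_ne_zero hss']
  rw [hGE, span_monomial_one_image_pow, mem_ideal_span_monomial_image]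
  intro hmem
  obtain ⟨s, hs, hsD⟩ := hmem D (by classical simp [coeff_monomial])
  have := Finsupp.mul_le_apply_of_mem_nsmul hE k s hs hsD
  have := hsD a
  omega

end MvPolynomial

section InitialIdeal

variable {K : Type*} [Field K] {n : ℕ} [NeZero n]

theorem xv_pow (j t : ℕ) :
    xv K n j ^ t = monomial (Finsupp.single (Fin.ofNat n (j - 1)) t) 1 :=
  X_pow_eq_monomial

theorem xv_eq_monomial_s12 (j : ℕ) : xv K n j = monomial (Finsupp.single (Fin.ofNat n (j - 1)) 1) 1 :=
  (pow_one _).symm.trans (xv_pow j 1)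

theorem Fin.ofNat_pred_inj {j j' : ℕ} (hj : 1 ≤ j) (hjn : j ≤ n) (hj' : 1 ≤ j') (hj'n : j' ≤ n) :
    Fin.ofNat n (j - 1) = Fin.ofNat n (j' - 1) ↔ j = j' := by
  rw [Fin.ext_iff, Fin.val_ofNat, Fin.val_ofNat, Nat.mod_eq_of_lt (by omega),
    Nat.mod_eq_of_lt (by omega)]
  omega

variable {p q r v w rz ε : ℕ} {qz : ℤ} {i d e f : ℕ}

theorem exists_monomial_two_le_of_mem_inPgens (hpn : n = p + 1) (hi : 1 ≤ i) (hip : i ≤ p - 1)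
    (hq : e < q) (hqε : e < ((q : ℤ) - qz - ε).toNat) (hf : f < v) :
    ∀ g ∈ inPgens K n p q r v w rz ε qz, ∃ s, g = monomial s 1 ∧
      (s ≤ Finsupp.single (Fin.ofNat n (i - 1)) d + Finsupp.single (Fin.ofNat n (p - 1)) e +
        Finsupp.single (Fin.ofNat n (n - 1)) f → 2 ≤ s (Fin.ofNat n (i - 1))) := by
  set ι : ℕ → Fin n := fun j => Fin.ofNat n (j - 1)
  have hιp : ∀ j, 1 ≤ j → j ≤ p - 1 → ι j ≠ ι p := fun j hj hjp h =>
    by rw [Fin.ofNat_pred_inj] at h <;> omega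
  have hιn : ∀ j, 1 ≤ j → j ≤ p → ι j ≠ ι n := fun j hj hjp h =>
    by rw [Fin.ofNat_pred_inj] at h <;> omega
  set D := Finsupp.single (ι i) d + Finsupp.single (ι p) e + Finsupp.single (ι n) f
  have hDp : D (ι p) = e := by simp [D, hιp i hi hip, hιn p (by omega) le_rfl]
  have hDn : D (ι n) = f := by simp [D, hιn i hi (by omega), hιn p (by omega) le_rfl]
  have hDj : ∀ j, 1 ≤ j → j ≤ p - 1 → 0 < D (ι j) → ι j = ι i := fun j hj hjp hpos => by
    by_contra hji
    simp [D, Ne.symm hji, Ne.symm (hιp j hj hjp), Ne.symm (hιn j hj (by omega))] at hpos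
  rintro g (((⟨j, -, -, rfl⟩ | ⟨j, -, -, -, rfl⟩) | rfl) | ⟨j, j', hj, hjj', hj'p, rfl⟩)
  · refine ⟨Finsupp.single (ι j) 1 + Finsupp.single (ι p) q, ?_, fun hs => ?_⟩
    · rw [xv_eq_monomial_s12, xv_pow, monomial_mul, one_mul]
    have := hs (ι p)
    simp only [Finsupp.add_apply, Finsupp.single_eq_same, hDp] at this
    omega
  · refine ⟨Finsupp.single (ι j) 1 + Finsupp.single (ι p) ((q : ℤ) - qz - ε).toNat +
      Finsupp.single (ι n) (v - w), ?_, fun hs => ?_⟩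
    · rw [xv_eq_monomial_s12, xv_pow, xv_pow, monomial_mul, monomial_mul, one_mul, one_mul]
    have := hs (ι p)
    simp only [Finsupp.add_apply, Finsupp.single_eq_same, hDp] at this
    omega
  · refine ⟨Finsupp.single (ι n) v, xv_pow n v, fun hs => ?_⟩
    have := hs (ι n)
    simp only [Finsupp.single_eq_same, hDn] at this
    omega
  · refine ⟨Finsupp.single (ι j) 1 + Finsupp.single (ι j') 1, ?_, fun hs => ?_⟩
    · rw [xv_eq_monomial_s12, xv_eq_monomial_s12, monomial_mul, one_mul]
    have hji := hDj j hj (by omega) ((hs (ι j)).trans_lt' (by simp))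
    have hj'i := hDj j' (by omega) hj'p ((hs (ι j')).trans_lt' (by simp))
    show 2 ≤ (Finsupp.single (ι j) 1 + Finsupp.single (ι j') 1 : Fin n →₀ ℕ) (ι i)
    rw [hji, hj'i, Finsupp.add_apply, Finsupp.single_eq_same]

theorem xv_pow_mul_pow_mul_pow_notMem_span_inPgens_pow {k : ℕ} (hpn : n = p + 1) (hi : 1 ≤ i)
    (hip : i ≤ p - 1) (hq : e < q) (hqε : e < ((q : ℤ) - qz - ε).toNat) (hf : f < v)
    (hd : d < k * 2) :
    xv K n i ^ d * xv K n p ^ e * xv K n n ^ f ∉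
      Ideal.span (inPgens K n p q r v w rz ε qz) ^ k := by
  have hιp : Fin.ofNat n (i - 1) ≠ Fin.ofNat n (p - 1) := by
    rw [Ne, Fin.ofNat_pred_inj] <;> omega
  have hιn : Fin.ofNat n (i - 1) ≠ Fin.ofNat n (n - 1) := by
    rw [Ne, Fin.ofNat_pred_inj] <;> omega
  simp only [xv_pow, monomial_mul, one_mul]
  refine monomial_one_notMem_span_pow
    (exists_monomial_two_le_of_mem_inPgens hpn hi hip hq hqε hf) ?_
  simpa only [Finsupp.add_apply, Finsupp.single_eq_same, Finsupp.single_eq_of_ne' hιp.symm,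
    Finsupp.single_eq_of_ne' hιn.symm, add_zero] using hd

end InitialIdeal

theorem stmt12_general {K : Type*} [Field K]
    (n p : ℕ) [NeZero n] (hp : p = n - 1)
    (qf : ℕ → ℤ) (rf : ℕ → ℕ)
    (hqr : ∀ t : ℕ, 1 ≤ rf t ∧ rf t ≤ p ∧ (t : ℤ) = qf t * p + rf t)
    (u : ℕ)
    (v : ℕ) (hv1 : 1 ≤ v)
    (w z : ℕ)
    (q r : ℕ) (hr : r = rf u)
    (ε : ℕ) (hε : ε = if rf z < r then 0 else 1)
    (inP : Ideal (MvPolynomial (Fin n) K))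
    (hinP : inP = Ideal.span (inPgens K n p q r v w (rf z) ε (qf z)))
    (hcase : 0 < ε ∨ 0 < qf z) (hexp : 0 ≤ (q : ℤ) - qf z - ε - 1) :
    ∀ i : ℕ, ε * p + r ≤ i + rf z → i ≤ p - 1 →
      xv K n i * xv K n p ^ ((q : ℤ) - qf z - ε - 1).toNat * xv K n n ^ (v - 1) ∉ rrSet inP ∧
      ∀ k : ℕ, 1 ≤ k →
        xv K n i * xv K n p ^ ((q : ℤ) - qf z - ε - 1).toNat * xv K n n ^ (v - 1) *
          (xv K n i ^ 2) ^ k ∉ inP ^ (k + 1) := by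
  intro i hi hip
  obtain ⟨-, hrzp, hz⟩ := hqr z
  have hr1 : 1 ≤ r := hr ▸ (hqr u).1
  have hi1 : 1 ≤ i := by split_ifs at hε <;> subst hε <;> omega
  have hqz : -1 ≤ qf z := by
    nlinarith [show (1 : ℤ) ≤ p by omega, show (0 : ℤ) ≤ z by omega, show (rf z : ℤ) ≤ p by omega]
  have hnot : ∀ k : ℕ,
      xv K n i * xv K n p ^ ((q : ℤ) - qf z - ε - 1).toNat * xv K n n ^ (v - 1) *
        (xv K n i ^ 2) ^ k ∉ inP ^ (k + 1) := fun k => by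
    rw [hinP, show ∀ a b c : MvPolynomial (Fin n) K, a * b * c * (a ^ 2) ^ k =
      a ^ (2 * k + 1) * b * c by intros; ring]
    exact xv_pow_mul_pow_mul_pow_notMem_span_inPgens_pow (by omega) hi1 hip (by omega) (by omega)
      (by omega) (by omega)
  refine ⟨fun hrr => ?_, fun k _ => hnot k⟩
  have hsq : xv K n i ^ 2 ∈ inP := hinP ▸ Ideal.subset_span (Or.inr ⟨i, i, hi1, le_rfl, hip, sq _⟩)
  obtain ⟨k, hk⟩ := exists_mul_pow_mem_pow_of_mem_rrSet hrr hsq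
  exact hnot k hk

/-- assume `ε > 0` or `qz > 0`, and `q − qz − ε − 1 ≥ 0`. Then for every `i`
with `εp + r − rz ≤ i ≤ p−1`, the monomial `x_i x_p^{q−qz−ε−1} x_n^{v−1}` is not in the
Ratliff-Rush closure of `inP`; in particular there is no `m ≥ 1` with
`x_i x_p^{q−qz−ε−1} x_n^{v−1} (x_i^2)^m ∈ (inP)^{m+1}`. -/
theorem stmt12 {K : Type*} [Field K]
    (n p : ℕ) [NeZero n] (hn : 2 ≤ n) (hp : p = n - 1)
    (m : ℕ → ℕ) (hm0 : 0 < m 0) (hmn : 0 < m n)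
    (harith : ∃ d : ℕ, 0 < d ∧ ∀ i < p, m (i + 1) = m i + d)
    (hgcd : ∀ c : ℕ, (∀ i ≤ p, c ∣ m i) → c ∣ m n → c = 1)
    (Γ Γ' : AddSubmonoid ℤ)
    (hΓ : Γ = AddSubmonoid.closure ((fun i => (m i : ℤ)) '' (Set.Iic p ∪ {n})))
    (hΓ' : Γ' = AddSubmonoid.closure ((fun i => (m i : ℤ)) '' Set.Iic p))
    (hmin : ∀ j ∈ (Set.Iic p ∪ {n} : Set ℕ),
      (m j : ℤ) ∉ AddSubmonoid.closure ((fun i => (m i : ℤ)) '' ((Set.Iic p ∪ {n}) \ {j})))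
    (qf : ℕ → ℤ) (rf : ℕ → ℕ)
    (hqr : ∀ t : ℕ, 1 ≤ rf t ∧ rf t ≤ p ∧ (t : ℤ) = qf t * p + rf t)
    (g : ℕ → ℤ) (hg : ∀ t, g t = qf t * m p + m (rf t))
    (S : Set ℤ) (hS : S = {γ : ℤ | γ ∈ Γ ∧ γ - m 0 ∉ Γ})
    (u : ℕ) (hu : g u ∉ S ∧ ∀ t < u, g t ∈ S)
    (v : ℕ) (hv1 : 1 ≤ v) (hv2 : (v : ℤ) * m n ∈ Γ')
    (hv3 : ∀ b : ℕ, 1 ≤ b → b < v → (b : ℤ) * m n ∉ Γ')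
    (w z L mu : ℕ) (hw : w ≤ v - 1) (hz : z ≤ u - 1) (hL : 1 ≤ L)
    (hgu : g u = (L : ℤ) * m 0 + (w : ℤ) * m n)
    (hvmn : (v : ℤ) * m n = (mu : ℤ) * m 0 + g z)
    (q r : ℕ) (hq : (q : ℤ) = qf u) (hr : r = rf u)
    (ε : ℕ) (hε : ε = if rf z < r then 0 else 1)
    (inP : Ideal (MvPolynomial (Fin n) K))
    (hinP : inP = Ideal.span (inPgens K n p q r v w (rf z) ε (qf z)))
    (hcase : 0 < ε ∨ 0 < qf z) (hexp : 0 ≤ (q : ℤ) - qf z - ε - 1) :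
    ∀ i : ℕ, ε * p + r ≤ i + rf z → i ≤ p - 1 →
      xv K n i * xv K n p ^ ((q : ℤ) - qf z - ε - 1).toNat * xv K n n ^ (v - 1) ∉ rrSet inP ∧
      ∀ k : ℕ, 1 ≤ k →
        xv K n i * xv K n p ^ ((q : ℤ) - qf z - ε - 1).toNat * xv K n n ^ (v - 1) *
          (xv K n i ^ 2) ^ k ∉ inP ^ (k + 1) :=
  stmt12_general n p hp qf rf hqr u v hv1 w z q r hr ε hε inP hinP hcase hexp
end
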